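/- arXiv:2002.05389 — 2 statements merged into one kernel-verified Lean document; each statement's English description precedes it below -/
import Mathlib

section
/- If a graph G has a minimum dominating set D such that some vertex outside D has exactly k neighbours in D, then for every ℓ with 1 ≤ ℓ ≤ k−1 the graph G is not γ-(k−ℓ)-critical. -/
open SimpleGraph

/-- `D` is a dominating set of `G`. -/
def SimpleGraph.IsDomSet {V : Type*} (G : SimpleGraph V) (D : Set V) : Prop :=
  ∀ v ∉ D, ∃ u ∈ D, G.Adj u v

/-- The domination number of `G`. -/
noncomputable def SimpleGraph.domNum {V : Type*} [Fintype V] (G : SimpleGraph V) : ℕ :=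
  sInf {k | ∃ D : Finset V, D.card = k ∧ G.IsDomSet ↑D}

/-- The graph obtained from `G` by subdividing each edge in `F` once: each `e ∈ F`
contributes a new vertex adjacent to the two endpoints of `e`, and the edges of `F`
are removed. -/
def SimpleGraph.subdiv {V : Type*} (G : SimpleGraph V) (F : Finset (Sym2 V)) :
    SimpleGraph (V ⊕ {e : Sym2 V // e ∈ F}) :=
  SimpleGraph.fromRel (fun a b => match a, b with
    | Sum.inl u, Sum.inl v => G.Adj u v ∧ s(u, v) ∉ F
    | Sum.inl u, Sum.inr e => u ∈ (e : Sym2 V)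
    | _, _ => False)

/-- `G` is `γ`-`q`-critical: subdividing any `q` edges increases the domination number,
while some set of `q - 1` edges can be subdivided without increasing it. -/
def SimpleGraph.IsQCritical {V : Type*} [Fintype V] (G : SimpleGraph V) (q : ℕ) : Prop :=
  (∀ F : Finset (Sym2 V), ↑F ⊆ G.edgeSet → F.card = q →
      G.domNum < (G.subdiv F).domNum) ∧
  (∃ F : Finset (Sym2 V), ↑F ⊆ G.edgeSet ∧ F.card = q - 1 ∧
      (G.subdiv F).domNum = G.domNum)

/-!
Subdivide the edges from `v` to `k - ℓ < k` of its neighbours in the minimum dominating set `D`.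
Then `D` still dominates the new graph: `v` keeps an unsubdivided edge to one of its `k` neighbours
in `D`, every other vertex outside `D` keeps the edge to its dominator (no subdivided edge joins it
to `D`), and each subdivision vertex is adjacent to its endpoint in `D`. So the domination number
does not grow, although `k - ℓ` edges were subdivided.
-/

open Finset

namespace SimpleGraph

variable {V : Type*}

lemma IsDomSet.domNum_le [Fintype V] {G : SimpleGraph V} {D : Finset V} (hD : G.IsDomSet ↑D) :
    G.domNum ≤ D.card :=
  Nat.sInf_le ⟨D, rfl, hD⟩

lemma subdiv_adj_inl_inl {G : SimpleGraph V} {F : Finset (Sym2 V)} {u w : V}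
    (h : G.Adj u w) (hF : s(u, w) ∉ F) :
    (G.subdiv F).Adj (Sum.inl u) (Sum.inl w) :=
  ⟨by simp [h.ne], Or.inl ⟨h, hF⟩⟩

lemma subdiv_adj_inl_inr {G : SimpleGraph V} {F : Finset (Sym2 V)} {u : V}
    {e : {e : Sym2 V // e ∈ F}} (h : u ∈ (e : Sym2 V)) :
    (G.subdiv F).Adj (Sum.inl u) (Sum.inr e) :=
  ⟨by simp, Or.inl h⟩

lemma isDomSet_subdiv_image_inl {G : SimpleGraph V} {F : Finset (Sym2 V)} {D : Set V}
    (hD : ∀ w ∉ D, ∃ u ∈ D, G.Adj u w ∧ s(u, w) ∉ F) (hF : ∀ e ∈ F, ∃ u ∈ D, u ∈ e) :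
    (G.subdiv F).IsDomSet (Sum.inl '' D) := by
  rintro (w | e) hx
  · obtain ⟨u, hu, hadj, huw⟩ := hD w fun hw => hx ⟨w, hw, rfl⟩
    exact ⟨Sum.inl u, ⟨u, hu, rfl⟩, subdiv_adj_inl_inl hadj huw⟩
  · obtain ⟨u, hu, hue⟩ := hF e.1 e.2
    exact ⟨Sum.inl u, ⟨u, hu, rfl⟩, subdiv_adj_inl_inr hue⟩

end SimpleGraph

section Star

variable {V : Type*} [DecidableEq V]

lemma mk_mem_image_mk_right_iff {S : Finset V} {u w v : V} :
    s(u, w) ∈ S.image (s(·, v)) ↔ u ∈ S ∧ w = v ∨ u = v ∧ w ∈ S := by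
  simp only [mem_image, Sym2.eq_iff]
  constructor
  · rintro ⟨a, ha, ⟨rfl, rfl⟩ | ⟨rfl, rfl⟩⟩
    exacts [Or.inl ⟨ha, rfl⟩, Or.inr ⟨rfl, ha⟩]
  · rintro (⟨hu, rfl⟩ | ⟨rfl, hw⟩)
    exacts [⟨u, hu, Or.inl ⟨rfl, rfl⟩⟩, ⟨w, hw, Or.inr ⟨rfl, rfl⟩⟩]

lemma card_image_mk_right {S : Finset V} {v : V} (hv : v ∉ S) :
    (S.image (s(·, v))).card = S.card :=
  card_image_of_injOn fun a ha b _ hab => by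
    rcases Sym2.eq_iff.mp hab with ⟨h, -⟩ | ⟨rfl, -⟩
    exacts [h, absurd ha hv]

lemma coe_image_mk_right_subset_edgeSet {G : SimpleGraph V} {S : Finset V} {v : V}
    (hS : ∀ a ∈ S, G.Adj a v) : ↑(S.image (s(·, v))) ⊆ G.edgeSet := by
  intro e he
  obtain ⟨a, ha, rfl⟩ := mem_image.mp he
  exact hS a ha

lemma domNum_subdiv_image_mk_right_le [Fintype V] {G : SimpleGraph V} {D S : Finset V} {v : V}
    (hD : G.IsDomSet ↑D) (hv : v ∉ D) (hSD : S ⊆ D) (hu : ∃ u ∈ D \ S, G.Adj u v) :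
    (G.subdiv (S.image (s(·, v)))).domNum ≤ D.card := by
  have hdom : (G.subdiv (S.image (s(·, v)))).IsDomSet
      ↑(D.image Sum.inl : Finset (V ⊕ {e // e ∈ S.image (s(·, v))})) := by
    rw [coe_image]
    refine isDomSet_subdiv_image_inl (fun w hw => ?_) fun e he => ?_
    · by_cases hwv : w = v
      · subst hwv
        obtain ⟨u, hu, huw⟩ := hu
        obtain ⟨huD, huS⟩ := mem_sdiff.mp hu
        refine ⟨u, huD, huw, ?_⟩
        rw [mk_mem_image_mk_right_iff]
        rintro (⟨huS', -⟩ | ⟨rfl, -⟩)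
        exacts [huS huS', hw huD]
      · obtain ⟨u, huD, huw⟩ := hD w hw
        refine ⟨u, huD, huw, ?_⟩
        rw [mk_mem_image_mk_right_iff]
        rintro (⟨-, rfl⟩ | ⟨rfl, -⟩)
        exacts [hwv rfl, hv huD]
    · obtain ⟨a, ha, rfl⟩ := mem_image.mp he
      exact ⟨a, hSD ha, Sym2.mem_mk_left a v⟩
  exact hdom.domNum_le.trans (card_image_of_injective _ Sum.inl_injective).le

end Star

theorem stmt4_general {V : Type*} [Fintype V] (G : SimpleGraph V) [DecidableRel G.Adj]
    (D : Finset V) (hD : G.IsDomSet ↑D) (hcard : D.card = G.domNum)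
    (v : V) (hv : v ∉ D) (k : ℕ) (hk : (D.filter (fun u => G.Adj u v)).card = k)
    (ℓ : ℕ) (h1 : 1 ≤ ℓ) :
    ¬ G.IsQCritical (k - ℓ) := by
  classical
  rintro ⟨hcrit, -⟩
  set N := D.filter (fun u => G.Adj u v)
  have hk_pos : 0 < k := by
    obtain ⟨u, hu, huv⟩ := hD v hv
    exact hk ▸ card_pos.mpr ⟨u, mem_filter.mpr ⟨hu, huv⟩⟩
  obtain ⟨S, hSN, hScard⟩ := exists_subset_card_eq (s := N) (n := k - ℓ) (by omega)
  have hSD : S ⊆ D := hSN.trans (filter_subset _ _)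
  have hu : ∃ u ∈ D \ S, G.Adj u v := by
    obtain ⟨u, huN, huS⟩ := exists_mem_notMem_of_card_lt_card (s := S) (t := N) (by omega)
    exact ⟨u, mem_sdiff.mpr ⟨(mem_filter.mp huN).1, huS⟩, (mem_filter.mp huN).2⟩
  have hlt := hcrit (S.image (s(·, v)))
    (coe_image_mk_right_subset_edgeSet fun a ha => (mem_filter.mp (hSN ha)).2)
    (by rw [card_image_mk_right fun h => hv (hSD h), hScard])
  have hle := domNum_subdiv_image_mk_right_le hD hv hSD hu
  omega

theorem stmt4 {V : Type*} [Fintype V] (G : SimpleGraph V) [DecidableRel G.Adj]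
    (D : Finset V) (hD : G.IsDomSet ↑D) (hcard : D.card = G.domNum)
    (v : V) (hv : v ∉ D) (k : ℕ) (hk : (D.filter (fun u => G.Adj u v)).card = k)
    (ℓ : ℕ) (h1 : 1 ≤ ℓ) (h2 : ℓ ≤ k - 1) :
    ¬ G.IsQCritical (k - ℓ) :=
  stmt4_general G D hD hcard v hv k hk ℓ h1
end

section
/- If G contains a universal vertex (a vertex adjacent to all other vertices) and G has at least 3 vertices, then subdividing any single edge of G increases the domination number; that is, G is γ-1-critical. -/
/-
A universal vertex dominates `G` on its own, so `γ(G) = 1`; it stays universal when no edge is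
subdivided. Subdividing an edge `ab` leaves no universal vertex when some third vertex `c`
exists: the new vertex misses `c`, an old vertex other than `a`, `b` misses the new vertex, and
`a` and `b` are no longer adjacent. Hence `γ(G_{ab}) ≥ 2`.
-/

open SimpleGraph

namespace SimpleGraph

variable {V : Type*}

lemma isDomSet_singleton_iff (G : SimpleGraph V) {x : V} :
    G.IsDomSet {x} ↔ ∀ y ≠ x, G.Adj x y := by
  simp [IsDomSet]

section DomNum

variable [Fintype V] (G : SimpleGraph V)

lemma exists_isDomSet_card_eq_domNum : ∃ D : Finset V, D.card = G.domNum ∧ G.IsDomSet ↑D :=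
  Nat.sInf_mem (s := {k | ∃ D : Finset V, D.card = k ∧ G.IsDomSet ↑D})
    ⟨_, Finset.univ, rfl, fun x hx => absurd (Finset.mem_coe.2 (Finset.mem_univ x)) hx⟩

lemma domNum_le_card {D : Finset V} (hD : G.IsDomSet ↑D) : G.domNum ≤ D.card :=
  Nat.sInf_le ⟨D, rfl, hD⟩

lemma domNum_pos [Nonempty V] : 0 < G.domNum := by
  obtain ⟨D, hcard, hD⟩ := G.exists_isDomSet_card_eq_domNum
  rw [← hcard, Finset.card_pos]
  by_cases hx : Classical.arbitrary V ∈ D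
  · exact ⟨_, hx⟩
  · obtain ⟨u, hu, -⟩ := hD _ hx
    exact ⟨u, hu⟩

lemma domNum_eq_one_iff [Nonempty V] : G.domNum = 1 ↔ ∃ x, ∀ y ≠ x, G.Adj x y := by
  constructor
  · intro h
    obtain ⟨D, hcard, hD⟩ := G.exists_isDomSet_card_eq_domNum
    obtain ⟨x, rfl⟩ := Finset.card_eq_one.1 (hcard.trans h)
    exact ⟨x, (G.isDomSet_singleton_iff).1 (by simpa using hD)⟩
  · rintro ⟨x, hx⟩
    have hle := G.domNum_le_card (D := {x}) (by simpa [isDomSet_singleton_iff] using hx)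
    have := G.domNum_pos
    simp only [Finset.card_singleton] at hle
    omega

end DomNum

section Subdiv

variable (G : SimpleGraph V) (F : Finset (Sym2 V))

@[simp]
lemma subdiv_adj_inl_inl_s5 {u w : V} :
    (G.subdiv F).Adj (.inl u) (.inl w) ↔ G.Adj u w ∧ s(u, w) ∉ F := by
  simp only [subdiv, fromRel_adj, ne_eq, Sum.inl.injEq]
  constructor
  · rintro ⟨-, h | ⟨h, hF⟩⟩
    · exact h
    · exact ⟨h.symm, Sym2.eq_swap (a := w) ▸ hF⟩
  · intro h
    exact ⟨h.1.ne, Or.inl h⟩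

@[simp]
lemma subdiv_adj_inl_inr_s5 {u : V} {e : {e : Sym2 V // e ∈ F}} :
    (G.subdiv F).Adj (.inl u) (.inr e) ↔ u ∈ (e : Sym2 V) := by
  simp [subdiv, fromRel_adj]

lemma subdiv_singleton_exists_not_adj {a b c : V} (hab : a ≠ b) (hca : c ≠ a) (hcb : c ≠ b)
    (x : V ⊕ {e : Sym2 V // e ∈ ({s(a, b)} : Finset (Sym2 V))}) :
    ∃ y ≠ x, ¬ (G.subdiv {s(a, b)}).Adj x y := by
  rcases x with u | e
  · by_cases hu : u = a ∨ u = b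
    · rcases hu with rfl | rfl
      · exact ⟨.inl b, by simpa using hab.symm, by simp⟩
      · exact ⟨.inl a, by simpa using hab, by simp [Sym2.eq_swap]⟩
    · exact ⟨.inr ⟨s(a, b), Finset.mem_singleton_self _⟩, Sum.inr_ne_inl,
        by simpa [Sym2.mem_iff] using hu⟩
  · refine ⟨.inl c, Sum.inl_ne_inr, fun hadj => ?_⟩
    have hc := (G.subdiv_adj_inl_inr_s5 _).1 hadj.symm
    rw [Finset.mem_singleton.1 e.2, Sym2.mem_iff] at hc
    exact hc.elim hca hcb

end Subdiv

end SimpleGraph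

theorem stmt5_general {V : Type*} [Fintype V] (G : SimpleGraph V)
    (hcard : 3 ≤ Fintype.card V) (v : V) (hv : ∀ u, u ≠ v → G.Adj v u) :
    G.IsQCritical 1 := by
  classical
  have : Nonempty V := ⟨v⟩
  have hdomG : G.domNum = 1 := G.domNum_eq_one_iff.2 ⟨v, hv⟩
  refine ⟨fun F hF hF1 => ?_, ⟨∅, by simp, rfl, ?_⟩⟩
  · obtain ⟨e, rfl⟩ := Finset.card_eq_one.1 hF1
    induction e using Sym2.ind with
    | _ a b =>
      have hab : G.Adj a b := hF (Finset.mem_singleton_self _)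
      obtain ⟨c, -, hc⟩ := Finset.exists_mem_notMem_of_card_lt_card (s := {a, b})
        (t := Finset.univ) (Finset.card_le_two.trans_lt (by rw [Finset.card_univ]; omega))
      simp only [Finset.mem_insert, Finset.mem_singleton, not_or] at hc
      have hne : (G.subdiv {s(a, b)}).domNum ≠ 1 := fun h => by
        obtain ⟨x, hx⟩ := (G.subdiv _).domNum_eq_one_iff.1 h
        obtain ⟨y, hyx, hy⟩ := G.subdiv_singleton_exists_not_adj hab.ne hc.1 hc.2 x
        exact hy (hx y hyx)
      have := (G.subdiv {s(a, b)}).domNum_pos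
      omega
  · rw [hdomG, domNum_eq_one_iff]
    refine ⟨.inl v, ?_⟩
    rintro (u | ⟨e, he⟩) hu
    · simpa using hv u (by simpa using hu)
    · simp at he

theorem stmt5 {V : Type*} [Fintype V] (G : SimpleGraph V) (hconn : G.Connected)
    (hcard : 3 ≤ Fintype.card V) (v : V) (hv : ∀ u, u ≠ v → G.Adj v u) :
    G.IsQCritical 1 :=
  stmt5_general G hcard v hv
end
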